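/- Define sequences q_t and r_t by q_1 = q_2 = 1/2, r_1 = 0, r_2 = 4√3/9, and for t ≥ 3: q_t = ((t-1)/(2^t - t - 1))·q_{t-1} and r_t = ((t-1)/((√3)^t - t - 1))·r_{t-1} + 2·(2^t/(t+1))^((t-1)/2)·q_{t-1}. Then for all positive integers t and n, c_t(n) ≥ q_t·2^n − r_t·(√3)^n. -/

import Mathlib

open scoped Classical

/-- `primeWeight t n` : sum over partitions of `n` into `t` distinct positive parts
`p 0 > p 1 > ⋯ > p (t-1) ≥ 1` of `(1/(t(t+1))) ∏_{i=1}^{t} ((i+1)/i)^{p_i}`. -/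
noncomputable def primeWeight (t n : ℕ) : ℝ :=
  ∑ p ∈ (Fintype.piFinset (fun _ : Fin t => Finset.range (n + 1))).filter
      (fun p => (∀ i j : Fin t, i < j → p j < p i) ∧ (∀ i, 1 ≤ p i) ∧
        ∑ i, p i = n),
    (1 / ((t : ℝ) * ((t : ℝ) + 1))) *
      ∏ i : Fin t, ((((i : ℕ) : ℝ) + 2) / (((i : ℕ) : ℝ) + 1)) ^ p i

/-- `qseq 1 = 1/2` and `qseq t = ((t-1)/(2^t - t - 1)) * qseq (t-1)` for `t ≥ 2`. -/
noncomputable def qseq : ℕ → ℝ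
  | 0 => 0
  | 1 => 1 / 2
  | t + 2 => (((t : ℝ) + 1) / (2 ^ (t + 2) - ((t : ℝ) + 2) - 1)) * qseq (t + 1)

/-- `rseq 1 = 0`, `rseq 2 = 4√3/9`, and for `t ≥ 3`,
`rseq t = ((t-1)/(√3^t - t - 1))·rseq (t-1) + 2·(2^t/(t+1))^((t-1)/2)·qseq (t-1)`. -/
noncomputable def rseq : ℕ → ℝ
  | 0 => 0
  | 1 => 0
  | 2 => 4 * Real.sqrt 3 / 9
  | t + 3 =>
      (((t : ℝ) + 2) / (Real.sqrt 3 ^ (t + 3) - ((t : ℝ) + 3) - 1)) * rseq (t + 2) +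
        2 * ((2 ^ (t + 3) : ℝ) / ((t : ℝ) + 4)) ^ ((((t : ℝ) + 3) - 1) / 2) * qseq (t + 2)

/-!
A partition of `n + t` into `t` distinct parts either has all parts `≥ 2`, and then arises from
a partition of `n` into `t` parts by adding `1` to every part, or has smallest part `1`, and then
arises from a partition of `n` into `t - 1` parts by adding `1` to every part and appending the
part `1`. Comparing weights gives `c_t(n + t) ≥ (t + 1) c_t(n) + (t - 1) c_{t-1}(n)`.
The sequences are built so that `q_t 2^n - r_t √3^n` satisfies the reverse inequality
(`2^t q_t = (t + 1) q_t + (t - 1) q_{t-1}` exactly, and `r_t` is large enough), so the bound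
propagates by induction on `t` and then on `n` in steps of `t`. For `t ≥ 2` and `n ≤ t` the bound
is nonpositive, because `q_t 2^t ≤ r_t √3^t` and `√3 < 2`.
-/

open Finset

noncomputable def distinctParts (t n : ℕ) : Finset (Fin t → ℕ) :=
  (Fintype.piFinset fun _ : Fin t => range (n + 1)).filter
    fun p => (∀ i j : Fin t, i < j → p j < p i) ∧ (∀ i, 1 ≤ p i) ∧ ∑ i, p i = n

noncomputable def partWeight (t : ℕ) (p : Fin t → ℕ) : ℝ :=
  (1 / ((t : ℝ) * ((t : ℝ) + 1))) *
    ∏ i : Fin t, ((((i : ℕ) : ℝ) + 2) / (((i : ℕ) : ℝ) + 1)) ^ p i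

lemma primeWeight_eq_sum (t n : ℕ) :
    primeWeight t n = ∑ p ∈ distinctParts t n, partWeight t p :=
  rfl

lemma partWeight_nonneg (t : ℕ) (p : Fin t → ℕ) : 0 ≤ partWeight t p := by
  unfold partWeight; positivity

lemma primeWeight_nonneg (t n : ℕ) : 0 ≤ primeWeight t n :=
  sum_nonneg fun p _ => partWeight_nonneg t p

lemma mem_distinctParts {t n : ℕ} {p : Fin t → ℕ} :
    p ∈ distinctParts t n ↔
      (∀ i j : Fin t, i < j → p j < p i) ∧ (∀ i, 1 ≤ p i) ∧ ∑ i, p i = n := by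
  simp only [distinctParts, mem_filter, Fintype.mem_piFinset, mem_range, and_iff_right_iff_imp]
  rintro ⟨-, -, hsum⟩ i
  have := single_le_sum (fun j _ => Nat.zero_le (p j)) (mem_univ i)
  omega

lemma prod_add_two_div_add_one (t : ℕ) :
    ∏ i : Fin t, ((((i : ℕ) : ℝ) + 2) / (((i : ℕ) : ℝ) + 1)) = (t : ℝ) + 1 := by
  induction t with
  | zero => simp
  | succ t ih =>
    simp only [Fin.prod_univ_castSucc, Fin.val_castSucc, ih, Fin.val_last]
    field_simp
    push_cast
    ring

lemma partWeight_add_one (t : ℕ) (p : Fin t → ℕ) :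
    partWeight t (fun i => p i + 1) = ((t : ℝ) + 1) * partWeight t p := by
  simp only [partWeight, pow_succ, prod_mul_distrib, prod_add_two_div_add_one]
  ring

lemma partWeight_snoc_one (t : ℕ) (q : Fin (t + 1) → ℕ) :
    partWeight (t + 2) (Fin.snoc (fun i => q i + 1) 1) =
      ((t : ℝ) + 1) * partWeight (t + 1) q := by
  simp only [partWeight, Fin.prod_univ_castSucc, Fin.snoc_castSucc, Fin.snoc_last,
    Fin.val_castSucc, Fin.val_last, pow_succ, prod_mul_distrib, prod_add_two_div_add_one]
  field_simp
  push_cast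
  ring

lemma add_one_mem_distinctParts {t m : ℕ} {p : Fin t → ℕ} (hp : p ∈ distinctParts t m) :
    (fun i => p i + 1) ∈ distinctParts t (m + t) := by
  obtain ⟨hdec, -, hsum⟩ := mem_distinctParts.mp hp
  refine mem_distinctParts.mpr ⟨fun i j hij => by simpa using hdec i j hij, by simp, ?_⟩
  simp [sum_add_distrib, hsum]

lemma snoc_one_mem_distinctParts {t m : ℕ} {q : Fin t → ℕ} (hq : q ∈ distinctParts t m) :
    Fin.snoc (fun i => q i + 1) 1 ∈ distinctParts (t + 1) (m + (t + 1)) := by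
  obtain ⟨hdec, hpos, hsum⟩ := mem_distinctParts.mp hq
  refine mem_distinctParts.mpr ⟨fun i j hij => ?_, Fin.lastCases (by simp) (by simp), ?_⟩
  · obtain ⟨i, rfl⟩ := Fin.exists_castSucc_eq.mpr (Fin.ne_last_of_lt hij)
    induction j using Fin.lastCases with
    | last => simpa [Nat.pos_iff_ne_zero, ← Nat.one_le_iff_ne_zero] using hpos i
    | cast j => simpa using hdec i j (Fin.castSucc_lt_castSucc_iff.mp hij)
  · simp [Fin.sum_univ_castSucc, sum_add_distrib, hsum]
    omega

theorem le_primeWeight_add (t m : ℕ) :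
    ((t : ℝ) + 3) * primeWeight (t + 2) m + ((t : ℝ) + 1) * primeWeight (t + 1) m ≤
      primeWeight (t + 2) (m + (t + 2)) := by
  set shift : (Fin (t + 2) → ℕ) → Fin (t + 2) → ℕ := fun p i => p i + 1
  set snocOne : (Fin (t + 1) → ℕ) → Fin (t + 2) → ℕ :=
    fun q => Fin.snoc (fun i => q i + 1) 1
  have shift_inj : Set.InjOn shift (distinctParts (t + 2) m) := fun p _ p' _ h =>
    funext fun i => by simpa [shift] using congrFun h i
  have snocOne_inj : Set.InjOn snocOne (distinctParts (t + 1) m) := fun q _ q' _ h =>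
    funext fun i => by simpa [snocOne] using congrFun h i.castSucc
  -- the two images are told apart by their last part
  have hdisj : Disjoint ((distinctParts (t + 2) m).image shift)
      ((distinctParts (t + 1) m).image snocOne) := by
    simp only [disjoint_left, mem_image, not_exists, not_and]
    rintro _ ⟨p, hp, rfl⟩ q _ h
    have := congrFun h (Fin.last (t + 1))
    have := (mem_distinctParts.mp hp).2.1 (Fin.last (t + 1))
    simp [shift, snocOne] at *
    omega
  have hsub : (distinctParts (t + 2) m).image shift ∪ (distinctParts (t + 1) m).image snocOne ⊆
      distinctParts (t + 2) (m + (t + 2)) := by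
    refine union_subset ?_ ?_ <;> rintro _ h <;> obtain ⟨p, hp, rfl⟩ := mem_image.mp h
    · exact add_one_mem_distinctParts hp
    · exact snoc_one_mem_distinctParts hp
  calc ((t : ℝ) + 3) * primeWeight (t + 2) m + ((t : ℝ) + 1) * primeWeight (t + 1) m
      = ∑ p ∈ (distinctParts (t + 2) m).image shift ∪ (distinctParts (t + 1) m).image snocOne,
          partWeight (t + 2) p := by
        rw [sum_union hdisj, sum_image shift_inj, sum_image snocOne_inj, primeWeight_eq_sum,
          primeWeight_eq_sum, mul_sum, mul_sum]
        congr 1 <;> refine sum_congr rfl fun p _ => ?_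
        · rw [partWeight_add_one]; push_cast; ring
        · rw [partWeight_snoc_one]
    _ ≤ primeWeight (t + 2) (m + (t + 2)) :=
        sum_le_sum_of_subset_of_nonneg hsub fun p _ _ => partWeight_nonneg _ p

lemma primeWeight_one (n : ℕ) (hn : 1 ≤ n) : primeWeight 1 n = 2 ^ n / 2 := by
  have : distinctParts 1 n = {fun _ => n} := by
    ext p
    simp only [mem_distinctParts, Fin.sum_univ_one, mem_singleton, funext_iff, Fin.forall_fin_one]
    constructor
    · exact fun h => h.2.2
    · rintro h; exact ⟨by simp, h ▸ hn, h⟩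
  simp [primeWeight_eq_sum, this, partWeight]
  ring

lemma add_four_le_two_pow (t : ℕ) : (t : ℝ) + 4 ≤ 2 ^ (t + 2) := by
  induction t with
  | zero => norm_num
  | succ t ih => rw [pow_succ]; push_cast; linarith

lemma add_four_lt_sqrt_three_pow (t : ℕ) : (t : ℝ) + 4 < √3 ^ (t + 3) := by
  have hsq : ∀ u : ℕ, ((u : ℝ) + 4) ^ 2 < 3 ^ (u + 3) := by
    intro u
    induction u with
    | zero => norm_num
    | succ u ih =>
      rw [show u + 1 + 3 = u + 3 + 1 by ring, pow_succ (3 : ℝ)]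
      push_cast
      nlinarith [u.cast_nonneg (α := ℝ)]
  refine lt_of_pow_lt_pow_left₀ 2 (by positivity) ?_
  rw [← pow_mul, mul_comm (t + 3), pow_mul, Real.sq_sqrt zero_le_three]
  exact hsq t

lemma qseq_pos (t : ℕ) : 0 < qseq (t + 1) := by
  induction t with
  | zero => norm_num [qseq]
  | succ t ih =>
    have := add_four_le_two_pow t
    rw [qseq]
    exact mul_pos (div_pos (by positivity) (by linarith)) ih

lemma two_pow_mul_qseq (t : ℕ) :
    2 ^ (t + 2) * qseq (t + 2) =
      ((t : ℝ) + 3) * qseq (t + 2) + ((t : ℝ) + 1) * qseq (t + 1) := by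
  have := add_four_le_two_pow t
  have : (2 : ℝ) ^ (t + 2) - (t + 2) - 1 ≠ 0 := by linarith
  rw [qseq]
  field_simp
  ring

lemma rseq_nonneg (t : ℕ) : 0 ≤ rseq t := by
  induction t using Nat.strong_induction_on with
  | _ t ih =>
    match t with
    | 0 | 1 => exact le_rfl
    | 2 => rw [rseq]; positivity
    | t + 3 =>
      have hD := add_four_lt_sqrt_three_pow t
      have hr := ih (t + 2) (by omega)
      have hq := qseq_pos (t + 1)
      rw [rseq]
      exact add_nonneg (mul_nonneg (div_nonneg (by positivity) (by linarith)) hr) (by positivity)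

lemma le_sqrt_three_pow_mul_rseq (t : ℕ) :
    ((t : ℝ) + 3) * rseq (t + 2) + ((t : ℝ) + 1) * rseq (t + 1) ≤
      √3 ^ (t + 2) * rseq (t + 2) := by
  cases t with
  | zero => norm_num [rseq]
  | succ t =>
    simp only [show t + 1 + 2 = t + 3 from rfl, show t + 1 + 1 = t + 2 from rfl, Nat.cast_succ]
    have hD := add_four_lt_sqrt_three_pow t
    set E :=
      2 * ((2 ^ (t + 3) : ℝ) / ((t : ℝ) + 4)) ^ ((((t : ℝ) + 3) - 1) / 2) * qseq (t + 2)
    have hE : 0 ≤ E := by have := qseq_pos (t + 1); positivity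
    have hrec : √3 ^ (t + 3) * rseq (t + 3) = ((t : ℝ) + 4) * rseq (t + 3) +
        ((t : ℝ) + 2) * rseq (t + 2) + (√3 ^ (t + 3) - ((t : ℝ) + 3) - 1) * E := by
      have : √3 ^ (t + 3) - ((t : ℝ) + 3) - 1 ≠ 0 := by linarith
      rw [rseq]
      field_simp
      ring
    have : 0 ≤ (√3 ^ (t + 3) - ((t : ℝ) + 3) - 1) * E := mul_nonneg (by linarith) hE
    linarith

lemma two_mul_qseq_le_rseq (t : ℕ) : 2 * qseq (t + 2) ≤ rseq (t + 3) := by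
  have hq := qseq_pos (t + 1)
  have hr := rseq_nonneg (t + 2)
  have hD := add_four_lt_sqrt_three_pow t
  have hbase : 1 ≤ (2 ^ (t + 3) : ℝ) / ((t : ℝ) + 4) := by
    rw [one_le_div (by positivity)]
    have := add_four_le_two_pow (t + 1)
    push_cast at this
    linarith
  -- the power factor in `rseq` is only ever used through `≥ 1`
  have ha := Real.one_le_rpow hbase (z := (((t : ℝ) + 3) - 1) / 2)
    (by linarith [t.cast_nonneg (α := ℝ)])
  rw [rseq]
  have : 0 ≤ ((t : ℝ) + 2) / (√3 ^ (t + 3) - ((t : ℝ) + 3) - 1) * rseq (t + 2) :=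
    mul_nonneg (div_nonneg (by positivity) (by linarith)) hr
  nlinarith

lemma qseq_mul_two_pow_le (t : ℕ) :
    qseq (t + 2) * 2 ^ (t + 2) ≤ rseq (t + 2) * √3 ^ (t + 2) := by
  cases t with
  | zero =>
    norm_num [qseq, rseq]
    nlinarith [Real.sq_sqrt zero_le_three, Real.sqrt_nonneg 3]
  | succ t =>
    show qseq (t + 3) * 2 ^ (t + 3) ≤ rseq (t + 3) * √3 ^ (t + 3)
    have hq := qseq_pos (t + 1)
    have h2 := add_four_le_two_pow t
    have h3 := add_four_lt_sqrt_three_pow t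
    have hD : (2 : ℝ) ^ (t + 2) ≤ 2 ^ (t + 3) - ((t : ℝ) + 3) - 1 := by
      linarith [pow_succ (2 : ℝ) (t + 2)]
    calc qseq (t + 3) * 2 ^ (t + 3)
        = ((t : ℝ) + 2) * 2 ^ (t + 3) / (2 ^ (t + 3) - ((t : ℝ) + 3) - 1) * qseq (t + 2) := by
          rw [qseq]; push_cast; ring
      _ ≤ 2 * √3 ^ (t + 3) * qseq (t + 2) := by
          gcongr
          rw [div_le_iff₀ (by linarith)]
          calc ((t : ℝ) + 2) * 2 ^ (t + 3) = 2 * (((t : ℝ) + 2) * 2 ^ (t + 2)) := by ring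
            _ ≤ 2 * (√3 ^ (t + 3) * (2 ^ (t + 3) - ((t : ℝ) + 3) - 1)) := by
                gcongr ?_ * (?_ * ?_)
                linarith
            _ = 2 * √3 ^ (t + 3) * (2 ^ (t + 3) - ((t : ℝ) + 3) - 1) := by ring
      _ ≤ rseq (t + 3) * √3 ^ (t + 3) := by
          rw [mul_right_comm]
          gcongr
          exact two_mul_qseq_le_rseq t

lemma mul_pow_le_mul_pow_of_le {a b x y : ℝ} {m n : ℕ} (ha : 0 ≤ a) (hy : 0 < y)
    (hyx : y ≤ x) (hmn : m ≤ n) (h : a * x ^ n ≤ b * y ^ n) : a * x ^ m ≤ b * y ^ m := by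
  obtain ⟨k, rfl⟩ := Nat.exists_eq_add_of_le hmn
  refine le_of_mul_le_mul_right ?_ (pow_pos hy k)
  calc a * x ^ m * y ^ k ≤ a * x ^ m * x ^ k := by
        gcongr
        exact mul_nonneg ha (pow_nonneg (hy.le.trans hyx) m)
    _ = a * x ^ (m + k) := by ring
    _ ≤ b * y ^ (m + k) := h
    _ = b * y ^ m * y ^ k := by ring

noncomputable def primeWeightLowerBound (t n : ℕ) : ℝ := qseq t * 2 ^ n - rseq t * √3 ^ n

lemma primeWeightLowerBound_nonpos {t n : ℕ} (hn : n ≤ t + 2) :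
    primeWeightLowerBound (t + 2) n ≤ 0 := by
  have := mul_pow_le_mul_pow_of_le (qseq_pos (t + 1)).le (by positivity)
    (Real.sqrt_le_iff.mpr ⟨by norm_num, by norm_num⟩) hn (qseq_mul_two_pow_le t)
  rw [primeWeightLowerBound]
  linarith

lemma primeWeightLowerBound_add_le (t m : ℕ) :
    primeWeightLowerBound (t + 2) (m + (t + 2)) ≤
      ((t : ℝ) + 3) * primeWeightLowerBound (t + 2) m +
        ((t : ℝ) + 1) * primeWeightLowerBound (t + 1) m := by
  have hq := two_pow_mul_qseq t
  have hr := mul_le_mul_of_nonneg_right (le_sqrt_three_pow_mul_rseq t)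
    (by positivity : 0 ≤ √3 ^ m)
  simp only [primeWeightLowerBound, pow_add]
  linear_combination 2 ^ m * hq + hr

theorem primeWeightLowerBound_le_primeWeight (t n : ℕ) (hn : 1 ≤ n) :
    primeWeightLowerBound (t + 1) n ≤ primeWeight (t + 1) n := by
  induction t generalizing n with
  | zero =>
    rw [primeWeight_one n hn]
    norm_num [primeWeightLowerBound, qseq, rseq]
    linarith
  | succ t ih =>
    induction n using Nat.strong_induction_on with
    | _ n ihn =>
      by_cases hnt : n ≤ t + 2
      · exact (primeWeightLowerBound_nonpos hnt).trans (primeWeight_nonneg _ _)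
      obtain ⟨m, rfl⟩ : ∃ m, n = m + (t + 2) := ⟨n - (t + 2), by omega⟩
      calc primeWeightLowerBound (t + 2) (m + (t + 2))
          ≤ ((t : ℝ) + 3) * primeWeightLowerBound (t + 2) m +
              ((t : ℝ) + 1) * primeWeightLowerBound (t + 1) m := primeWeightLowerBound_add_le t m
        _ ≤ ((t : ℝ) + 3) * primeWeight (t + 2) m +
              ((t : ℝ) + 1) * primeWeight (t + 1) m := by
            gcongr
            · exact ihn m (by omega) (by omega)
            · exact ih m (by omega)
        _ ≤ primeWeight (t + 2) (m + (t + 2)) := le_primeWeight_add t m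

theorem stmt_10_general (t n : ℕ) (hn : 1 ≤ n) :
    primeWeight t n ≥ qseq t * 2 ^ n - rseq t * Real.sqrt 3 ^ n := by
  cases t with
  | zero => simpa [qseq, rseq] using primeWeight_nonneg 0 n
  | succ t => exact primeWeightLowerBound_le_primeWeight t n hn

theorem stmt_10 (t n : ℕ) (ht : 1 ≤ t) (hn : 1 ≤ n) :
    primeWeight t n ≥ qseq t * 2 ^ n - rseq t * Real.sqrt 3 ^ n :=
  stmt_10_general t n hn
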